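/- arXiv:1710.06078 — 4 statements merged into one kernel-verified Lean document; each statement's English description precedes it below -/
import Mathlib

section
/- The softmax map σ: ℝ^K → ℝ^K defined by σ(r)_i = exp(r_i)/Σ_{j=1}^K exp(r_j) is Lipschitz with constant 1/2 with respect to the Euclidean norms: for all r, r' ∈ ℝ^K, ‖σ(r) − σ(r')‖_2 ≤ (1/2)‖r − r'‖_2. In particular, closeness of the log-ratio coordinates r, r' controls the Euclidean distance between the corresponding probability vectors. -/
/-!
With `p = σ(x)` and `logSumExp x = log ∑ⱼ exp xⱼ`, we have `σᵢ = exp (xᵢ - logSumExp x)` and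
`∇ logSumExp = σ`, so the Jacobian of `σ` at `x` is `J = diag p - p pᵀ`. It is symmetric with
quadratic form `⟪J v, v⟫ = ∑ᵢ pᵢvᵢ² - (∑ᵢ pᵢvᵢ)² = Var_p(v)`, hence `‖J‖ = sup Var_p(v) / ‖v‖²`.
Dropping the off-diagonal terms of `∑ᵢⱼ pᵢpⱼ(vᵢ + vⱼ)² = 2 ∑ᵢ pᵢvᵢ² + 2 (∑ᵢ pᵢvᵢ)²` gives
`(∑ᵢ pᵢvᵢ)² ≥ ∑ᵢ pᵢ(2pᵢ - 1)vᵢ²`, so `Var_p(v) ≤ 2 ∑ᵢ pᵢ(1 - pᵢ)vᵢ² ≤ ½ ‖v‖²`. The mean value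
inequality turns `‖J‖ ≤ ½` into the Lipschitz bound.
-/

/-- The softmax map `σ(r)ᵢ = exp rᵢ / Σⱼ exp rⱼ` on `ℝ^K`. -/
noncomputable def softmax {K : ℕ} (r : EuclideanSpace ℝ (Fin K)) :
    EuclideanSpace ℝ (Fin K) :=
  (WithLp.equiv 2 (Fin K → ℝ)).symm fun i => Real.exp (r i) / ∑ j, Real.exp (r j)

open Finset Real
open scoped RealInnerProductSpace

section Variance

variable {ι : Type*} [Fintype ι] {p : ι → ℝ} (v : ι → ℝ)

lemma sq_sum_mul_le_sum_mul_sq (hp : p ∈ stdSimplex ℝ ι) :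
    (∑ i, p i * v i) ^ 2 ≤ ∑ i, p i * v i ^ 2 := by
  have hcs := sum_sq_le_sum_mul_sum_of_sq_le_mul univ (r := fun i => p i * v i)
    (fun i _ => hp.1 i) (fun i _ => mul_nonneg (hp.1 i) (sq_nonneg (v i)))
    (fun i _ => le_of_eq (by ring))
  rwa [hp.2, one_mul] at hcs

lemma two_mul_sum_sq_mul_sq_le (hp : p ∈ stdSimplex ℝ ι) :
    2 * ∑ i, p i ^ 2 * v i ^ 2 ≤ ∑ i, p i * v i ^ 2 + (∑ i, p i * v i) ^ 2 := by
  have hdiag : ∀ i, p i * p i * (v i + v i) ^ 2 ≤ ∑ j, p i * p j * (v i + v j) ^ 2 := fun i =>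
    single_le_sum (f := fun j => p i * p j * (v i + v j) ^ 2)
      (fun j _ => mul_nonneg (mul_nonneg (hp.1 i) (hp.1 j)) (sq_nonneg _)) (mem_univ i)
  have hexpand : ∑ i, ∑ j, p i * p j * (v i + v j) ^ 2
      = 2 * ∑ i, p i * v i ^ 2 + 2 * (∑ i, p i * v i) ^ 2 := by
    have hterm : ∀ i j, p i * p j * (v i + v j) ^ 2
        = p i * v i ^ 2 * p j + 2 * (p i * v i) * (p j * v j) + p i * (p j * v j ^ 2) :=
      fun i j => by ring
    simp only [hterm, sum_add_distrib, ← mul_sum, ← sum_mul, hp.2]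
    ring
  have hsum := sum_le_sum fun i (_ : i ∈ univ) => hdiag i
  rw [hexpand] at hsum
  calc 2 * ∑ i, p i ^ 2 * v i ^ 2 = (∑ i, p i * p i * (v i + v i) ^ 2) / 2 := by
        rw [mul_sum, sum_div]; exact sum_congr rfl fun i _ => by ring
    _ ≤ _ := by linarith

lemma sum_mul_sq_sub_sq_sum_mul_le (hp : p ∈ stdSimplex ℝ ι) :
    ∑ i, p i * v i ^ 2 - (∑ i, p i * v i) ^ 2 ≤ 1 / 2 * ∑ i, v i ^ 2 := by
  have hquarter : ∀ i, 2 * (p i * v i ^ 2 - p i ^ 2 * v i ^ 2) ≤ 1 / 2 * v i ^ 2 := fun i => by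
    nlinarith [sq_nonneg (2 * p i - 1), sq_nonneg (v i)]
  have hsum := sum_le_sum fun i (_ : i ∈ univ) => hquarter i
  rw [← mul_sum, ← mul_sum, sum_sub_distrib] at hsum
  linarith [two_mul_sum_sq_mul_sq_le v hp]

end Variance

section Jacobian

open Matrix

variable {ι : Type*} [Fintype ι] [DecidableEq ι]

noncomputable def softmaxJacobian (p : EuclideanSpace ℝ ι) :
    EuclideanSpace ℝ ι →L[ℝ] EuclideanSpace ℝ ι :=
  toEuclideanCLM (𝕜 := ℝ) (diagonal ⇑p - vecMulVec ⇑p ⇑p)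

lemma softmaxJacobian_apply (p v : EuclideanSpace ℝ ι) (i : ι) :
    softmaxJacobian p v i = p i * (v i - ∑ j, p j * v j) := by
  simp [softmaxJacobian, mulVec_diagonal, vecMulVec_mulVec, dotProduct, mul_sub, mul_comm]

lemma isSymmetric_softmaxJacobian (p : EuclideanSpace ℝ ι) :
    (softmaxJacobian p : EuclideanSpace ℝ ι →ₗ[ℝ] EuclideanSpace ℝ ι).IsSymmetric := by
  rw [softmaxJacobian, coe_toEuclideanCLM_eq_toEuclideanLin, isSymmetric_toEuclideanLin_iff]
  exact (isHermitian_diagonal _).sub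
    (by simp [IsHermitian, conjTranspose_eq_transpose_of_trivial, transpose_vecMulVec])

lemma inner_softmaxJacobian_self (p v : EuclideanSpace ℝ ι) :
    ⟪softmaxJacobian p v, v⟫ = ∑ i, p i * v i ^ 2 - (∑ i, p i * v i) ^ 2 := by
  simp only [PiLp.inner_apply, softmaxJacobian_apply, RCLike.inner_apply, conj_trivial]
  rw [sq, mul_sum, ← sum_sub_distrib]
  exact sum_congr rfl fun i _ => by ring

lemma norm_softmaxJacobian_le {p : EuclideanSpace ℝ ι} (hp : ⇑p ∈ stdSimplex ℝ ι) :
    ‖softmaxJacobian p‖ ≤ 1 / 2 := by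
  rw [(softmaxJacobian p).norm_eq_iSup_rayleighQuotient (isSymmetric_softmaxJacobian p)]
  refine ciSup_le fun v => ?_
  have hnorm : ‖v‖ ^ 2 = ∑ i, v i ^ 2 := EuclideanSpace.real_norm_sq_eq v
  have hlower := sq_sum_mul_le_sum_mul_sq v hp
  have hupper := sum_mul_sq_sub_sq_sum_mul_le v hp
  rw [ContinuousLinearMap.rayleighQuotient, ContinuousLinearMap.reApplyInnerSelf_apply,
    RCLike.re_to_real, inner_softmaxJacobian_self, abs_div, abs_sq,
    abs_of_nonneg (sub_nonneg.2 hlower)]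
  exact div_le_of_le_mul₀ (sq_nonneg _) (by norm_num) (by linarith)

end Jacobian

lemma sum_exp_pos {ι : Type*} [Fintype ι] [Nonempty ι] (f : ι → ℝ) : 0 < ∑ j, exp (f j) :=
  sum_pos (fun j _ => exp_pos (f j)) univ_nonempty

section Softmax

variable {K : ℕ}

noncomputable def logSumExp (x : EuclideanSpace ℝ (Fin K)) : ℝ :=
  log (∑ j, exp (x j))

lemma softmax_apply (x : EuclideanSpace ℝ (Fin K)) (i : Fin K) :
    softmax x i = exp (x i) / ∑ j, exp (x j) := rfl

lemma softmax_mem_stdSimplex [Nonempty (Fin K)] (x : EuclideanSpace ℝ (Fin K)) :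
    ⇑(softmax x) ∈ stdSimplex ℝ (Fin K) :=
  ⟨fun i => div_nonneg (exp_pos _).le (sum_exp_pos _).le,
    by simp only [softmax_apply, ← sum_div, div_self (sum_exp_pos _).ne']⟩

lemma softmax_apply_eq_exp_sub_logSumExp [Nonempty (Fin K)] (x : EuclideanSpace ℝ (Fin K))
    (i : Fin K) : softmax x i = exp (x i - logSumExp x) := by
  rw [exp_sub, logSumExp, exp_log (sum_exp_pos _), softmax_apply]

lemma hasFDerivAt_logSumExp [Nonempty (Fin K)] (x : EuclideanSpace ℝ (Fin K)) :
    HasFDerivAt logSumExp (innerSL ℝ (softmax x)) x := by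
  have hsum : HasFDerivAt (fun y : EuclideanSpace ℝ (Fin K) => ∑ j, exp (y j))
      (∑ j, exp (x j) • PiLp.proj 2 (fun _ => ℝ) j) x :=
    HasFDerivAt.fun_sum fun j _ => (PiLp.hasFDerivAt_apply (𝕜 := ℝ) 2 x j).exp
  refine (hsum.log (sum_exp_pos _).ne').congr_fderiv ?_
  ext v
  simp only [_root_.smul_apply, _root_.sum_apply, innerSL_apply_apply, PiLp.inner_apply,
    softmax_apply, PiLp.proj_apply, smul_eq_mul, RCLike.inner_apply, conj_trivial, mul_sum]
  exact sum_congr rfl fun j _ => by ring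

lemma hasFDerivAt_softmax (x : EuclideanSpace ℝ (Fin K)) :
    HasFDerivAt softmax (softmaxJacobian (softmax x)) x := by
  refine hasFDerivWithinAt_univ.1 <| (hasFDerivWithinAt_piLp 2).2 fun i => ?_
  have : Nonempty (Fin K) := ⟨i⟩
  have hexp := ((PiLp.hasFDerivAt_apply (𝕜 := ℝ) 2 x i).sub (hasFDerivAt_logSumExp x)).exp
  rw [funext fun y => softmax_apply_eq_exp_sub_logSumExp y i]
  refine (hexp.congr_fderiv ?_).hasFDerivWithinAt
  ext v
  simp [softmaxJacobian_apply, softmax_apply_eq_exp_sub_logSumExp, PiLp.inner_apply, mul_comm]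

end Softmax

/-- The softmax map is `1/2`-Lipschitz with respect to the Euclidean norms:
`‖σ(r) − σ(r')‖₂ ≤ (1/2) ‖r − r'‖₂` for all `r, r' ∈ ℝ^K`. -/
theorem softmax_lipschitz_half {K : ℕ} (r r' : EuclideanSpace ℝ (Fin K)) :
    ‖softmax r - softmax r'‖ ≤ (1 / 2) * ‖r - r'‖ := by
  rcases isEmpty_or_nonempty (Fin K) with hK | hK
  · simp [Subsingleton.elim r r']
  · exact convex_univ.norm_image_sub_le_of_norm_hasFDerivWithin_le
      (fun x _ => (hasFDerivAt_softmax x).hasFDerivWithinAt)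
      (fun x _ => norm_softmaxJacobian_le (softmax_mem_stdSimplex x))
      (Set.mem_univ r') (Set.mem_univ r)
end

section
/- For every entrywise positive K×K real matrix M, the Birkhoff contraction coefficient satisfies τ(M) < 1; consequently, for all entrywise positive row vectors x, y ∈ ℝ^K that are not positive scalar multiples of each other, d(xM, yM) ≤ τ(M) · d(x,y) < d(x,y), where d is the Hilbert projective metric. -/
/-!
Write `x = r • y + z` with `r = min_i x_i / y_i`, so that `z ≥ 0` and `z ≤ (R - r) • y` for
`R = max_i x_i / y_i`. Then `(xM)_j / (yM)_j = r + (zM)_j / (yM)_j`. If the entries of each row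
of `M` agree up to a factor `ε` (e.g. `ε = min M / max M`), the excesses `(zM)_j / (yM)_j` agree
up to a factor `ε²` and lie in `[0, R - r]`. A weighted AM–GM estimate turns this into
`d(xM, yM) ≤ (1 - ε²) d(x, y)`, so `τ(M) ≤ 1 - ε² < 1`.
-/

/-- The Hilbert projective metric `d(x,y) = log ((max_i x_i/y_i) / (min_j x_j/y_j))`
for entrywise positive vectors in `ℝ^K`. -/
noncomputable def hilbertDist {K : ℕ} (x y : Fin K → ℝ) : ℝ :=
  Real.log ((⨆ i, x i / y i) / (⨅ i, x i / y i))

/-- The Birkhoff contraction coefficient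
`τ(M) = sup { d(xM, yM)/d(x,y) : x, y entrywise positive, d(x,y) > 0 }`. -/
noncomputable def birkhoff {K : ℕ} (M : Matrix (Fin K) (Fin K) ℝ) : ℝ :=
  sSup {t : ℝ | ∃ x y : Fin K → ℝ, (∀ i, 0 < x i) ∧ (∀ i, 0 < y i) ∧
    0 < hilbertDist x y ∧
    t = hilbertDist (Matrix.vecMul x M) (Matrix.vecMul y M) / hilbertDist x y}

open Real Matrix

lemma Matrix.exists_pos_mul_le_of_pos {ι κ : Type*} [Finite ι] [Finite κ] [Nonempty ι]
    [Nonempty κ] {M : Matrix ι κ ℝ} (hM : ∀ i j, 0 < M i j) :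
    ∃ ε, 0 < ε ∧ ε ≤ 1 ∧ ∀ i j k, ε * M i k ≤ M i j := by
  obtain ⟨p, hp⟩ := Finite.exists_min fun p : ι × κ => M p.1 p.2
  obtain ⟨q, hq⟩ := Finite.exists_max fun p : ι × κ => M p.1 p.2
  refine ⟨M p.1 p.2 / M q.1 q.2, div_pos (hM _ _) (hM _ _),
    div_le_one_of_le₀ (hp q) (hM _ _).le, fun i j k => ?_⟩
  rw [div_mul_eq_mul_div, div_le_iff₀ (hM _ _)]
  exact mul_le_mul (hp (i, j)) (hq (i, k)) (hM _ _).le (hM _ _).le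

section VecMul

variable {ι κ : Type*} [Fintype ι] {M : Matrix ι κ ℝ}

lemma Matrix.vecMul_pos [Nonempty ι] (hM : ∀ i j, 0 < M i j) {v : ι → ℝ} (hv : ∀ i, 0 < v i)
    (j : κ) : 0 < (v ᵥ* M) j :=
  Finset.sum_pos (fun i _ => mul_pos (hv i) (hM i j)) Finset.univ_nonempty

lemma Matrix.vecMul_le_vecMul_of_le (hM : ∀ i j, 0 ≤ M i j) {v w : ι → ℝ} (hvw : v ≤ w)
    (j : κ) : (v ᵥ* M) j ≤ (w ᵥ* M) j :=
  dotProduct_le_dotProduct_of_nonneg_right hvw fun i => hM i j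

lemma Matrix.mul_vecMul_le_vecMul {ε : ℝ} (hεM : ∀ i j k, ε * M i k ≤ M i j) {v : ι → ℝ}
    (hv : 0 ≤ v) (j k : κ) : ε * (v ᵥ* M) k ≤ (v ᵥ* M) j := by
  simp only [vecMul, dotProduct, Finset.mul_sum]
  refine Finset.sum_le_sum fun i _ => ?_
  rw [mul_left_comm]
  exact mul_le_mul_of_nonneg_left (hεM i j k) (hv i)

lemma Matrix.sq_mul_div_vecMul_le [Nonempty ι] (hM : ∀ i j, 0 < M i j) {ε : ℝ} (hε : 0 ≤ ε)
    (hεM : ∀ i j k, ε * M i k ≤ M i j) {v w : ι → ℝ} (hv : 0 ≤ v) (hw : ∀ i, 0 < w i)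
    (j k : κ) : ε ^ 2 * ((v ᵥ* M) j / (w ᵥ* M) j) ≤ (v ᵥ* M) k / (w ᵥ* M) k := by
  have hwj := vecMul_pos hM hw j
  have hwk := vecMul_pos hM hw k
  have hvk : 0 ≤ (v ᵥ* M) k := dotProduct_nonneg_of_nonneg hv fun i => (hM i k).le
  have hv_cross := mul_vecMul_le_vecMul hεM hv k j
  have hw_cross := mul_vecMul_le_vecMul hεM (fun i => (hw i).le) j k
  rw [← mul_div_assoc, div_le_div_iff₀ hwj hwk]
  calc ε ^ 2 * (v ᵥ* M) j * (w ᵥ* M) k = (ε * (v ᵥ* M) j) * (ε * (w ᵥ* M) k) := by ring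
    _ ≤ (v ᵥ* M) k * (w ᵥ* M) j := mul_le_mul hv_cross hw_cross (by positivity) hvk

end VecMul

-- The left side increases with `B`, so it suffices to take `B = R - r`; there
-- `r + σ (R - r) ≥ R ^ σ * r ^ (1 - σ)` by weighted AM–GM.
lemma log_add_sub_log_add_mul_le {σ r B R : ℝ} (hσ0 : 0 ≤ σ) (hσ1 : σ ≤ 1) (hr : 0 < r)
    (hB : 0 ≤ B) (hBR : B ≤ R - r) :
    log (r + B) - log (r + σ * B) ≤ (1 - σ) * (log R - log r) := by
  have hR : 0 < R := by linarith
  have hmean : 0 < r + σ * (R - r) := by nlinarith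
  have h_mono : log (r + B) - log (r + σ * B) ≤ log R - log (r + σ * (R - r)) := by
    rw [← log_div (by positivity) (by positivity), ← log_div hR.ne' hmean.ne']
    refine log_le_log (by positivity) ?_
    rw [div_le_div_iff₀ (by positivity) hmean]
    nlinarith [mul_nonneg (mul_nonneg hr.le (sub_nonneg.2 hσ1)) (sub_nonneg.2 hBR)]
  have h_amgm : R ^ σ * r ^ (1 - σ) ≤ r + σ * (R - r) := by
    linarith [geom_mean_le_arith_mean2_weighted hσ0 (sub_nonneg.2 hσ1) hR.le hr.le
      (add_sub_cancel σ 1)]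
  have h_log := log_le_log (by positivity) h_amgm
  rw [log_mul (by positivity) (by positivity), log_rpow hR, log_rpow hr] at h_log
  linarith

section HilbertDist

variable {K : ℕ}

lemma exists_hilbertDist_eq [NeZero K] (x y : Fin K → ℝ) :
    ∃ i₀ i₁, (∀ i, x i₀ / y i₀ ≤ x i / y i) ∧ (∀ i, x i / y i ≤ x i₁ / y i₁) ∧
      hilbertDist x y = log ((x i₁ / y i₁) / (x i₀ / y i₀)) := by
  obtain ⟨i₀, h₀⟩ := exists_eq_ciInf_of_finite (f := fun i => x i / y i)
  obtain ⟨i₁, h₁⟩ := exists_eq_ciSup_of_finite (f := fun i => x i / y i)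
  refine ⟨i₀, i₁, fun i => h₀ ▸ ciInf_le (Finite.bddBelow_range _) i,
    fun i => h₁ ▸ le_ciSup (f := fun i => x i / y i) (Finite.bddAbove_range _) i, ?_⟩
  rw [hilbertDist, h₀, h₁]

lemma hilbertDist_le_of_forall_log_sub_le [NeZero K] {x y : Fin K → ℝ} (hx : ∀ i, 0 < x i)
    (hy : ∀ i, 0 < y i) {L : ℝ} (h : ∀ j k, log (x j / y j) - log (x k / y k) ≤ L) :
    hilbertDist x y ≤ L := by
  obtain ⟨i₀, i₁, -, -, hd⟩ := exists_hilbertDist_eq x y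
  rw [hd, log_div (div_pos (hx i₁) (hy i₁)).ne' (div_pos (hx i₀) (hy i₀)).ne']
  exact h i₁ i₀

lemma hilbertDist_pos [NeZero K] {x y : Fin K → ℝ} (hx : ∀ i, 0 < x i) (hy : ∀ i, 0 < y i)
    (hxy : ¬ ∃ c : ℝ, 0 < c ∧ x = c • y) : 0 < hilbertDist x y := by
  obtain ⟨i₀, i₁, h₀, h₁, hd⟩ := exists_hilbertDist_eq x y
  have hr : 0 < x i₀ / y i₀ := div_pos (hx i₀) (hy i₀)
  rw [hd]
  refine log_pos ((one_lt_div hr).2 (lt_of_not_ge fun hle => hxy ⟨_, hr, funext fun i => ?_⟩))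
  have hi : x i / y i = x i₀ / y i₀ := le_antisymm ((h₁ i).trans hle) (h₀ i)
  rw [Pi.smul_apply, smul_eq_mul, ← hi, div_mul_cancel₀ _ (hy i).ne']

end HilbertDist

section Birkhoff

variable {K : ℕ} {M : Matrix (Fin K) (Fin K) ℝ}

theorem hilbertDist_vecMul_le [NeZero K] (hM : ∀ i j, 0 < M i j) {ε : ℝ} (hε0 : 0 ≤ ε)
    (hε1 : ε ≤ 1) (hεM : ∀ i j k, ε * M i k ≤ M i j) {x y : Fin K → ℝ} (hx : ∀ i, 0 < x i)
    (hy : ∀ i, 0 < y i) :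
    hilbertDist (x ᵥ* M) (y ᵥ* M) ≤ (1 - ε ^ 2) * hilbertDist x y := by
  obtain ⟨i₀, i₁, h₀, h₁, hd⟩ := exists_hilbertDist_eq x y
  set r := x i₀ / y i₀
  set R := x i₁ / y i₁
  have hr : 0 < r := div_pos (hx i₀) (hy i₀)
  set z := x - r • y
  have hz : 0 ≤ z := fun i => by
    simpa [z] using (le_div_iff₀ (hy i)).1 (h₀ i)
  have hzR : z ≤ (R - r) • y := fun i => by
    simpa [z, sub_mul] using (div_le_iff₀ (hy i)).1 (h₁ i)
  have hyM := vecMul_pos hM hy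
  set B : Fin K → ℝ := fun j => (z ᵥ* M) j / (y ᵥ* M) j
  have hB : ∀ j, 0 ≤ B j := fun j =>
    div_nonneg (dotProduct_nonneg_of_nonneg hz fun i => (hM i j).le) (hyM j).le
  have hBR : ∀ j, B j ≤ R - r := fun j => by
    rw [div_le_iff₀ (hyM j)]
    simpa [smul_vecMul] using vecMul_le_vecMul_of_le (fun i j => (hM i j).le) hzR j
  have hρ : ∀ j, (x ᵥ* M) j / (y ᵥ* M) j = r + B j := fun j => by
    rw [show x = z + r • y by simp [z], add_vecMul, smul_vecMul, Pi.add_apply, Pi.smul_apply,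
      smul_eq_mul, add_div, mul_div_cancel_right₀ _ (hyM j).ne', add_comm]
  rw [hd, log_div (div_pos (hx i₁) (hy i₁)).ne' hr.ne']
  refine hilbertDist_le_of_forall_log_sub_le (vecMul_pos hM hx) hyM fun j k => ?_
  rw [hρ j, hρ k]
  calc log (r + B j) - log (r + B k) ≤ log (r + B j) - log (r + ε ^ 2 * B j) := by
        gcongr
        · exact add_pos_of_pos_of_nonneg hr (mul_nonneg (sq_nonneg ε) (hB j))
        · exact sq_mul_div_vecMul_le hM hε0 hεM hz hy j k
    _ ≤ (1 - ε ^ 2) * (log R - log r) :=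
        log_add_sub_log_add_mul_le (by positivity) (pow_le_one₀ hε0 hε1) hr (hB j) (hBR j)

lemma birkhoff_le {τ : ℝ} (hτ : 0 ≤ τ)
    (h : ∀ x y : Fin K → ℝ, (∀ i, 0 < x i) → (∀ i, 0 < y i) →
      hilbertDist (x ᵥ* M) (y ᵥ* M) ≤ τ * hilbertDist x y) :
    birkhoff M ≤ τ := by
  refine Real.sSup_le ?_ hτ
  rintro _ ⟨x, y, hx, hy, hd, rfl⟩
  exact (div_le_iff₀ hd).2 (h x y hx hy)

lemma hilbertDist_vecMul_le_birkhoff_mul {τ : ℝ}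
    (h : ∀ x y : Fin K → ℝ, (∀ i, 0 < x i) → (∀ i, 0 < y i) →
      hilbertDist (x ᵥ* M) (y ᵥ* M) ≤ τ * hilbertDist x y)
    {x y : Fin K → ℝ} (hx : ∀ i, 0 < x i) (hy : ∀ i, 0 < y i) (hd : 0 < hilbertDist x y) :
    hilbertDist (x ᵥ* M) (y ᵥ* M) ≤ birkhoff M * hilbertDist x y := by
  have hbdd : BddAbove {t : ℝ | ∃ x y : Fin K → ℝ, (∀ i, 0 < x i) ∧ (∀ i, 0 < y i) ∧
      0 < hilbertDist x y ∧ t = hilbertDist (x ᵥ* M) (y ᵥ* M) / hilbertDist x y} := by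
    refine ⟨τ, ?_⟩
    rintro _ ⟨x, y, hx, hy, hd, rfl⟩
    exact (div_le_iff₀ hd).2 (h x y hx hy)
  exact (div_le_iff₀ hd).1 (le_csSup hbdd ⟨x, y, hx, hy, hd, rfl⟩)

end Birkhoff

/-- For every entrywise positive matrix `M`, the Birkhoff contraction coefficient
satisfies `τ(M) < 1`, and for positive vectors `x, y` that are not positive scalar
multiples of each other, `d(xM, yM) ≤ τ(M) d(x,y) < d(x,y)`. -/
theorem birkhoff_lt_one_and_contracts
    {K : ℕ} (hK : 0 < K)
    (M : Matrix (Fin K) (Fin K) ℝ) (hM_pos : ∀ i j, 0 < M i j) :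
    birkhoff M < 1 ∧
      ∀ x y : Fin K → ℝ, (∀ i, 0 < x i) → (∀ i, 0 < y i) →
        (¬ ∃ c : ℝ, 0 < c ∧ x = c • y) →
        hilbertDist (Matrix.vecMul x M) (Matrix.vecMul y M) ≤
            birkhoff M * hilbertDist x y ∧
          birkhoff M * hilbertDist x y < hilbertDist x y := by
  have : NeZero K := ⟨hK.ne'⟩
  obtain ⟨ε, hε0, hε1, hεM⟩ := exists_pos_mul_le_of_pos hM_pos
  have hcontract := fun (x y : Fin K → ℝ) (hx : ∀ i, 0 < x i) (hy : ∀ i, 0 < y i) =>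
    hilbertDist_vecMul_le hM_pos hε0.le hε1 hεM hx hy
  have hτ : birkhoff M < 1 :=
    (birkhoff_le (sub_nonneg.2 (pow_le_one₀ hε0.le hε1)) hcontract).trans_lt
      (sub_lt_self 1 (pow_pos hε0 2))
  refine ⟨hτ, fun x y hx hy hxy => ?_⟩
  have hd := hilbertDist_pos hx hy hxy
  exact ⟨hilbertDist_vecMul_le_birkhoff_mul hcontract hx hy hd, mul_lt_of_lt_one_left hd hτ⟩
end

section
/- For every entrywise positive K×K real matrix M, the Birkhoff contraction coefficient of its transpose equals that of M: τ(Mᵀ) = τ(M). -/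
/-! Both coefficients are given by the Birkhoff–Hopf formula `τ(M) = (√φ - 1) / (√φ + 1)`, where
`φ(M)` is the largest cross ratio `M k i * M l j / (M l i * M k j)`, and `φ(Mᵀ) = φ(M)` because
transposing swaps the roles of rows and columns in a cross ratio.

Upper bound: `d(xM, yM)` is the log cross ratio of `xM, yM` at two columns `p, q`. Along the
geometric path from `y` to `x` its derivative is the difference of two weighted means of
`log (x / y)`, for weights whose ratios vary by at most the factor `φ`; two such means differ by at
most `(√φ - 1) / (√φ + 1)` times the oscillation of `log (x / y)`, which is `d(x, y)`.

Lower bound: perturbing `y` in one coordinate `k` gives the derivative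
`y k * M k i / (yM) i - y k * M k j / (yM) j ≤ τ(M)`; concentrating `y` on two rows `k, l` with
suitable weights makes the left side equal to `(√φ - 1) / (√φ + 1)` for the extremal cross ratio. -/

open Real Finset
open scoped Matrix

noncomputable def birkhoffRatio (R : ℝ) : ℝ := (√R - 1) / (√R + 1)

lemma birkhoffRatio_nonneg {R : ℝ} (hR : 1 ≤ R) : 0 ≤ birkhoffRatio R := by
  have : 1 ≤ √R := one_le_sqrt.mpr hR
  unfold birkhoffRatio
  exact div_nonneg (by linarith) (by linarith)

lemma sub_one_mul_birkhoffRatio {R : ℝ} (hR : 0 ≤ R) :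
    (R - 1) * birkhoffRatio R = (√R - 1) ^ 2 := by
  have hs : √R ^ 2 = R := sq_sqrt hR
  have : √R + 1 ≠ 0 := by positivity
  unfold birkhoffRatio
  field_simp
  linear_combination (1 - √R) * hs

lemma mul_div_sub_mul_div_eq_birkhoffRatio {A B C D : ℝ} (hA : 0 < A) (hB : 0 < B) (hC : 0 < C)
    (hD : 0 < D) :
    √C * √D * A / (√C * √D * A + √A * √B * C) - √C * √D * B / (√C * √D * B + √A * √B * D)
      = birkhoffRatio (A * D / (C * B)) := by
  obtain ⟨a, ha, rfl⟩ : ∃ a, 0 < a ∧ a ^ 2 = A := ⟨√A, sqrt_pos.2 hA, sq_sqrt hA.le⟩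
  obtain ⟨b, hb, rfl⟩ : ∃ b, 0 < b ∧ b ^ 2 = B := ⟨√B, sqrt_pos.2 hB, sq_sqrt hB.le⟩
  obtain ⟨c, hc, rfl⟩ : ∃ c, 0 < c ∧ c ^ 2 = C := ⟨√C, sqrt_pos.2 hC, sq_sqrt hC.le⟩
  obtain ⟨d, hd, rfl⟩ : ∃ d, 0 < d ∧ d ^ 2 = D := ⟨√D, sqrt_pos.2 hD, sq_sqrt hD.le⟩
  have hcr : a ^ 2 * d ^ 2 / (c ^ 2 * b ^ 2) = (a * d / (c * b)) ^ 2 := by ring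
  rw [birkhoffRatio, hcr]
  simp only [sqrt_sq ha.le, sqrt_sq hb.le, sqrt_sq hc.le, sqrt_sq hd.le,
    sqrt_sq (by positivity : 0 ≤ a * d / (c * b))]
  field_simp
  ring

section WeightedMean

variable {ι : Type*} [Fintype ι]

lemma abs_sum_mul_le_of_sum_eq_zero {w L : ι → ℝ} {l₀ l₁ : ℝ} (hw : ∑ i, w i = 0)
    (hL : ∀ i, L i ∈ Set.Icc l₀ l₁) :
    |∑ i, w i * L i| ≤ (∑ i, |w i|) / 2 * (l₁ - l₀) := by
  have hcenter : ∑ i, w i * L i = ∑ i, w i * (L i - (l₀ + l₁) / 2) := by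
    simp only [mul_sub, sum_sub_distrib, ← sum_mul, hw, zero_mul, sub_zero]
  rw [hcenter, sum_div, sum_mul]
  refine (abs_sum_le_sum_abs _ _).trans (sum_le_sum fun i _ => ?_)
  have : |L i - (l₀ + l₁) / 2| ≤ (l₁ - l₀) / 2 :=
    abs_le.mpr ⟨by linarith [(hL i).1], by linarith [(hL i).2]⟩
  rw [abs_mul, div_mul_eq_mul_div, mul_div_assoc]
  exact mul_le_mul_of_nonneg_left this (abs_nonneg _)

lemma sum_abs_mul_sub_mul_le {u w : ι → ℝ} {lam R : ℝ} (hlam : 0 < lam)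
    (hR : 1 ≤ R) (hlo : ∀ i, lam * u i ≤ w i) (hhi : ∀ i, w i ≤ R * lam * u i) :
    ∑ i, |u i * ∑ j, w j - w i * ∑ j, u j| ≤ 2 * birkhoffRatio R * ((∑ j, u j) * ∑ j, w j) := by
  set U := ∑ j, u j
  set V := ∑ j, w j
  have hVlo : lam * U ≤ V := by rw [mul_sum]; exact sum_le_sum fun i _ => hlo i
  have hVhi : V ≤ R * lam * U := by rw [mul_sum]; exact sum_le_sum fun i _ => hhi i
  rcases hR.eq_or_lt with rfl | hR
  · have hV : V = lam * U := by linarith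
    have hw : ∀ i, w i = lam * u i := fun i => le_antisymm (by simpa using hhi i) (hlo i)
    have hterm : ∀ i, u i * V - w i * U = 0 := fun i => by rw [hV, hw]; ring
    simp [hterm, birkhoffRatio]
  -- each term lies below the chord through the extreme ratios `lam` and `R * lam`
  have hchord : ∀ i, (R - 1) * lam * |u i * V - w i * U|
      ≤ (V - lam * U) * (R * lam * u i - w i) + (R * lam * U - V) * (w i - lam * u i) := by
    intro i
    have h1 := mul_nonneg (sub_nonneg.mpr (hlo i)) (sub_nonneg.mpr hVhi)
    have h2 := mul_nonneg (sub_nonneg.mpr hVlo) (sub_nonneg.mpr (hhi i))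
    rcases abs_cases (u i * V - w i * U) with ⟨h, -⟩ | ⟨h, -⟩ <;> rw [h] <;> nlinarith
  have hsum : ∑ i, ((V - lam * U) * (R * lam * u i - w i) + (R * lam * U - V) * (w i - lam * u i))
      = 2 * (V - lam * U) * (R * lam * U - V) := by
    simp only [sum_add_distrib, ← mul_sum, sum_sub_distrib, ← mul_sum]
    ring
  have hamgm : (V - lam * U) * (R * lam * U - V) ≤ lam * (√R - 1) ^ 2 * (U * V) := by
    have hs : √R ^ 2 = R := sq_sqrt (by linarith)
    have : lam * (√R - 1) ^ 2 * (U * V) - (V - lam * U) * (R * lam * U - V)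
        = (V - √R * lam * U) ^ 2 := by
      linear_combination (lam * U * V - lam ^ 2 * U ^ 2) * hs
    linarith [sq_nonneg (V - √R * lam * U)]
  have hpos : 0 < (R - 1) * lam := mul_pos (by linarith) hlam
  refine le_of_mul_le_mul_left ?_ hpos
  calc (R - 1) * lam * ∑ i, |u i * V - w i * U|
      ≤ 2 * (V - lam * U) * (R * lam * U - V) := by
        rw [mul_sum, ← hsum]; exact sum_le_sum fun i _ => hchord i
    _ ≤ 2 * (lam * (√R - 1) ^ 2 * (U * V)) := by linarith
    _ = (R - 1) * lam * (2 * birkhoffRatio R * (U * V)) := by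
        rw [← sub_one_mul_birkhoffRatio (by linarith : (0:ℝ) ≤ R)]; ring

variable [Nonempty ι]

lemma sum_abs_div_sub_div_le {u w : ι → ℝ} {R : ℝ} (hu : ∀ i, 0 < u i) (hw : ∀ i, 0 < w i)
    (hR : ∀ i j, w i * u j ≤ R * (u i * w j)) :
    ∑ i, |u i / ∑ j, u j - w i / ∑ j, w j| ≤ 2 * birkhoffRatio R := by
  obtain ⟨j₀, hj₀⟩ := Finite.exists_min fun j => w j / u j
  have hR1 : 1 ≤ R := le_of_mul_le_mul_right (by simpa [mul_comm] using hR j₀ j₀)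
    (mul_pos (hu j₀) (hw j₀))
  have hlo : ∀ i, w j₀ / u j₀ * u i ≤ w i := fun i => by
    have := hj₀ i
    rwa [div_le_div_iff₀ (hu j₀) (hu i), ← div_le_iff₀ (hu j₀), mul_div_right_comm] at this
  have hhi : ∀ i, w i ≤ R * (w j₀ / u j₀) * u i := fun i => by
    rw [mul_div_assoc', div_mul_eq_mul_div, le_div_iff₀ (hu j₀), mul_right_comm R]
    simpa [mul_assoc, mul_comm, mul_left_comm] using hR i j₀
  have hU : 0 < ∑ j, u j := sum_pos (fun j _ => hu j) univ_nonempty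
  have hV : 0 < ∑ j, w j := sum_pos (fun j _ => hw j) univ_nonempty
  have hterm : ∀ i, |u i / ∑ j, u j - w i / ∑ j, w j|
      = |u i * ∑ j, w j - w i * ∑ j, u j| / ((∑ j, u j) * ∑ j, w j) := fun i => by
    rw [div_sub_div _ _ hU.ne' hV.ne', abs_div, abs_of_pos (mul_pos hU hV), mul_comm _ (w i)]
  simp only [hterm, ← sum_div]
  rw [div_le_iff₀ (mul_pos hU hV)]
  exact sum_abs_mul_sub_mul_le (div_pos (hw j₀) (hu j₀)) hR1 hlo hhi

lemma abs_sum_mul_div_sub_sum_mul_div_le {u w L : ι → ℝ} {R l₀ l₁ : ℝ} (hu : ∀ i, 0 < u i)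
    (hw : ∀ i, 0 < w i) (hR : ∀ i j, w i * u j ≤ R * (u i * w j)) (hL : ∀ i, L i ∈ Set.Icc l₀ l₁) :
    |(∑ i, u i * L i) / (∑ i, u i) - (∑ i, w i * L i) / (∑ i, w i)|
      ≤ birkhoffRatio R * (l₁ - l₀) := by
  have hU : 0 < ∑ j, u j := sum_pos (fun j _ => hu j) univ_nonempty
  have hV : 0 < ∑ j, w j := sum_pos (fun j _ => hw j) univ_nonempty
  have hl : 0 ≤ l₁ - l₀ := by
    obtain ⟨i⟩ := ‹Nonempty ι›
    linarith [(hL i).1, (hL i).2]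
  have hdiff : (∑ i, u i * L i) / (∑ i, u i) - (∑ i, w i * L i) / (∑ i, w i)
      = ∑ i, (u i / ∑ j, u j - w i / ∑ j, w j) * L i := by
    simp only [sub_mul, sum_sub_distrib, sum_div, div_mul_eq_mul_div]
  have hzero : ∑ i, (u i / ∑ j, u j - w i / ∑ j, w j) = 0 := by
    rw [sum_sub_distrib, ← sum_div, ← sum_div, div_self hU.ne', div_self hV.ne', sub_self]
  rw [hdiff]
  calc _ ≤ (∑ i, |u i / ∑ j, u j - w i / ∑ j, w j|) / 2 * (l₁ - l₀) :=
        abs_sum_mul_le_of_sum_eq_zero hzero hL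
    _ ≤ 2 * birkhoffRatio R / 2 * (l₁ - l₀) := by
        gcongr; exact sum_abs_div_sub_div_le hu hw hR
    _ = birkhoffRatio R * (l₁ - l₀) := by ring

lemma hasDerivAt_log_sum_mul_exp {c : ι → ℝ} (hc : ∀ i, 0 < c i) (L : ι → ℝ) (s : ℝ) :
    HasDerivAt (fun s => log (∑ i, c i * exp (s * L i)))
      ((∑ i, c i * exp (s * L i) * L i) / ∑ i, c i * exp (s * L i)) s := by
  refine HasDerivAt.log (HasDerivAt.fun_sum fun i _ => ?_)
    (sum_pos (fun i _ => ?_) univ_nonempty).ne'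
  · simpa [mul_assoc] using (((hasDerivAt_id s).mul_const (L i)).exp).const_mul (c i)
  · exact mul_pos (hc i) (exp_pos _)

end WeightedMean

section HilbertDist

variable {K : ℕ} [NeZero K] {x y : Fin K → ℝ}

lemma hilbertDist_eq_log_div_of_le {p q : Fin K} (hp : ∀ i, x i / y i ≤ x p / y p)
    (hq : ∀ i, x q / y q ≤ x i / y i) :
    hilbertDist x y = log ((x p / y p) / (x q / y q)) := by
  rw [hilbertDist,
    le_antisymm (ciSup_le hp) (le_ciSup (f := fun i => x i / y i) (Finite.bddAbove_range _) p),
    le_antisymm (ciInf_le (Finite.bddBelow_range _) q) (le_ciInf hq)]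

lemma log_div_le_hilbertDist (hx : ∀ i, 0 < x i) (hy : ∀ i, 0 < y i) (i j : Fin K) :
    log ((x i / y i) / (x j / y j)) ≤ hilbertDist x y := by
  obtain ⟨p, hp⟩ := Finite.exists_max fun i => x i / y i
  obtain ⟨q, hq⟩ := Finite.exists_min fun i => x i / y i
  have hr : ∀ i, 0 < x i / y i := fun i => div_pos (hx i) (hy i)
  rw [hilbertDist_eq_log_div_of_le hp hq]
  exact log_le_log (div_pos (hr i) (hr j)) (div_le_div₀ (hr p).le (hp i) (hr q) (hq j))

lemma hilbertDist_nonneg (hx : ∀ i, 0 < x i) (hy : ∀ i, 0 < y i) : 0 ≤ hilbertDist x y := by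
  simpa [(div_pos (hx 0) (hy 0)).ne'] using log_div_le_hilbertDist hx hy 0 0

end HilbertDist

section Contraction

variable {K : ℕ} [NeZero K] {M : Matrix (Fin K) (Fin K) ℝ} {x y : Fin K → ℝ}

lemma vecMul_pos (hM : ∀ i j, 0 < M i j) (hx : ∀ i, 0 < x i) (j : Fin K) :
    0 < Matrix.vecMul x M j :=
  sum_pos (fun i _ => mul_pos (hx i) (hM i j)) univ_nonempty

/-- Proved by differentiating along the geometric path `s ↦ y ^ (1 - s) * x ^ s` from `y`
to `x`. -/
lemma log_div_vecMul_le (hM : ∀ i j, 0 < M i j) (hx : ∀ i, 0 < x i) (hy : ∀ i, 0 < y i)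
    {p q : Fin K} {R : ℝ} (hR : ∀ i j, M i q * M j p ≤ R * (M i p * M j q)) :
    log ((Matrix.vecMul x M p / Matrix.vecMul y M p) / (Matrix.vecMul x M q / Matrix.vecMul y M q))
      ≤ birkhoffRatio R * hilbertDist x y := by
  obtain ⟨i₁, hi₁⟩ := Finite.exists_max fun i => x i / y i
  obtain ⟨i₀, hi₀⟩ := Finite.exists_min fun i => x i / y i
  set L : Fin K → ℝ := fun i => log (x i / y i)
  have hr : ∀ i, 0 < x i / y i := fun i => div_pos (hx i) (hy i)
  have hL : ∀ i, L i ∈ Set.Icc (L i₀) (L i₁) := fun i =>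
    ⟨log_le_log (hr i₀) (hi₀ i), log_le_log (hr i) (hi₁ i)⟩
  have hd : hilbertDist x y = L i₁ - L i₀ := by
    rw [hilbertDist_eq_log_div_of_le hi₁ hi₀, log_div (hr i₁).ne' (hr i₀).ne']
  set φ : ℝ → ℝ := fun s => log (∑ i, y i * M i p * exp (s * L i))
    - log (∑ i, y i * M i q * exp (s * L i))
  set φ' : ℝ → ℝ := fun s =>
    (∑ i, y i * M i p * exp (s * L i) * L i) / (∑ i, y i * M i p * exp (s * L i))
      - (∑ i, y i * M i q * exp (s * L i) * L i) / (∑ i, y i * M i q * exp (s * L i))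
  have hφ : ∀ s, HasDerivAt φ (φ' s) s := fun s =>
    (hasDerivAt_log_sum_mul_exp (fun i => mul_pos (hy i) (hM i p)) L s).sub
      (hasDerivAt_log_sum_mul_exp (fun i => mul_pos (hy i) (hM i q)) L s)
  have hφ' : ∀ s, φ' s ≤ birkhoffRatio R * hilbertDist x y := fun s => by
    rw [hd]
    refine (le_abs_self _).trans (abs_sum_mul_div_sub_sum_mul_div_le
      (fun i => mul_pos (mul_pos (hy i) (hM i p)) (exp_pos _))
      (fun i => mul_pos (mul_pos (hy i) (hM i q)) (exp_pos _)) (fun i j => ?_) hL)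
    have := mul_le_mul_of_nonneg_left (hR i j)
      (mul_pos (mul_pos (hy i) (exp_pos (s * L i))) (mul_pos (hy j) (exp_pos (s * L j)))).le
    linarith
  have hend : ∀ j, ∑ i, y i * M i j * exp (1 * L i) = Matrix.vecMul x M j := fun j =>
    sum_congr rfl fun i _ => by
      rw [one_mul, exp_log (hr i)]
      field_simp [(hy i).ne']
  obtain ⟨c, -, hc⟩ := exists_hasDerivAt_eq_slope φ φ' zero_lt_one
    (fun s _ => (hφ s).continuousAt.continuousWithinAt) fun s _ => hφ s
  calc _ = φ 1 - φ 0 := by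
        simp only [φ, hend, zero_mul, exp_zero, mul_one]
        rw [log_div (div_pos (vecMul_pos hM hx p) (vecMul_pos hM hy p)).ne'
          (div_pos (vecMul_pos hM hx q) (vecMul_pos hM hy q)).ne',
          log_div (vecMul_pos hM hx p).ne' (vecMul_pos hM hy p).ne',
          log_div (vecMul_pos hM hx q).ne' (vecMul_pos hM hy q).ne']
        simp only [Matrix.vecMul, dotProduct]
        ring
    _ = φ' c := by rw [hc, sub_zero, div_one]
    _ ≤ _ := hφ' c

end Contraction

section CrossRatio

variable {m n : Type*} (M : Matrix m n ℝ)

noncomputable def crossRatio (r : m × m) (c : n × n) : ℝ :=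
  M r.1 c.1 * M r.2 c.2 / (M r.2 c.1 * M r.1 c.2)

noncomputable def maxCrossRatio : ℝ :=
  ⨆ rc : (m × m) × (n × n), crossRatio M rc.1 rc.2

lemma crossRatio_transpose (r : n × n) (c : m × m) : crossRatio Mᵀ r c = crossRatio M c r := by
  simp only [crossRatio, Matrix.transpose_apply, mul_comm (M c.2 r.1)]

lemma maxCrossRatio_transpose : maxCrossRatio Mᵀ = maxCrossRatio M := by
  simp only [maxCrossRatio, crossRatio_transpose]
  exact (Equiv.prodComm _ _).iSup_comp (g := fun rc => crossRatio M rc.1 rc.2)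

lemma crossRatio_diag {M : Matrix m n ℝ} (hM : ∀ i j, 0 < M i j) (k : m) (c : n × n) :
    crossRatio M (k, k) c = 1 :=
  div_self (mul_pos (hM k c.1) (hM k c.2)).ne'

variable [Finite m] [Finite n]

lemma crossRatio_le_maxCrossRatio (r : m × m) (c : n × n) : crossRatio M r c ≤ maxCrossRatio M :=
  le_ciSup (f := fun rc : (m × m) × (n × n) => crossRatio M rc.1 rc.2) (Finite.bddAbove_range _)
    (r, c)

variable [Nonempty m] [Nonempty n]

lemma exists_crossRatio_eq_maxCrossRatio : ∃ r c, crossRatio M r c = maxCrossRatio M := by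
  obtain ⟨rc, h⟩ := Finite.exists_max fun rc : (m × m) × (n × n) => crossRatio M rc.1 rc.2
  exact ⟨rc.1, rc.2, le_antisymm (crossRatio_le_maxCrossRatio M _ _) (ciSup_le h)⟩

lemma one_le_maxCrossRatio {M : Matrix m n ℝ} (hM : ∀ i j, 0 < M i j) : 1 ≤ maxCrossRatio M := by
  obtain ⟨k⟩ := ‹Nonempty m›
  obtain ⟨i⟩ := ‹Nonempty n›
  exact (crossRatio_diag hM k (i, i)).symm.le.trans (crossRatio_le_maxCrossRatio M _ _)

end CrossRatio

section Birkhoff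

variable {K : ℕ} [NeZero K] {M : Matrix (Fin K) (Fin K) ℝ} {x y : Fin K → ℝ}

theorem hilbertDist_vecMul_le_s15 (hM : ∀ i j, 0 < M i j) (hx : ∀ i, 0 < x i) (hy : ∀ i, 0 < y i) :
    hilbertDist (Matrix.vecMul x M) (Matrix.vecMul y M)
      ≤ birkhoffRatio (maxCrossRatio M) * hilbertDist x y := by
  obtain ⟨p, hp⟩ := Finite.exists_max fun j => Matrix.vecMul x M j / Matrix.vecMul y M j
  obtain ⟨q, hq⟩ := Finite.exists_min fun j => Matrix.vecMul x M j / Matrix.vecMul y M j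
  rw [hilbertDist_eq_log_div_of_le hp hq]
  refine log_div_vecMul_le hM hx hy fun i j => ?_
  have := crossRatio_le_maxCrossRatio M (j, i) (p, q)
  rwa [crossRatio, div_le_iff₀ (mul_pos (hM i p) (hM j q)), mul_comm (M j p)] at this

lemma birkhoff_le_s15 (hM : ∀ i j, 0 < M i j) : birkhoff M ≤ birkhoffRatio (maxCrossRatio M) := by
  refine Real.sSup_le ?_ (birkhoffRatio_nonneg (one_le_maxCrossRatio hM))
  rintro _ ⟨x, y, hx, hy, hd, rfl⟩
  exact (div_le_iff₀ hd).2 (hilbertDist_vecMul_le_s15 hM hx hy)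

lemma div_hilbertDist_le_birkhoff (hM : ∀ i j, 0 < M i j) (hx : ∀ i, 0 < x i)
    (hy : ∀ i, 0 < y i) (hd : 0 < hilbertDist x y) :
    hilbertDist (Matrix.vecMul x M) (Matrix.vecMul y M) / hilbertDist x y ≤ birkhoff M := by
  refine le_csSup ⟨birkhoffRatio (maxCrossRatio M), ?_⟩ ⟨x, y, hx, hy, hd, rfl⟩
  rintro _ ⟨x, y, hx, hy, hd, rfl⟩
  exact (div_le_iff₀ hd).2 (hilbertDist_vecMul_le_s15 hM hx hy)

lemma birkhoff_nonneg (hM : ∀ i j, 0 < M i j) : 0 ≤ birkhoff M := by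
  refine Real.sSup_nonneg ?_
  rintro _ ⟨x, y, hx, hy, hd, rfl⟩
  exact div_nonneg (hilbertDist_nonneg (vecMul_pos hM hx) (vecMul_pos hM hy)) hd.le

/-- The infinitesimal version of the lower bound: perturb `y` in the single coordinate `k`. -/
lemma mul_div_vecMul_sub_le_birkhoff (hM : ∀ i j, 0 < M i j) (hy : ∀ i, 0 < y i) {k l : Fin K}
    (hkl : k ≠ l) (i j : Fin K) :
    y k * M k i / Matrix.vecMul y M i - y k * M k j / Matrix.vecMul y M j ≤ birkhoff M := by
  set L : Fin K → ℝ := Pi.single k 1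
  set x : ℝ → Fin K → ℝ := fun s m => y m * exp (s * L m)
  have hx : ∀ s m, 0 < x s m := fun s m => mul_pos (hy m) (exp_pos _)
  have hratio : ∀ s m, x s m / y m = exp (s * L m) := fun s m => mul_div_cancel_left₀ _ (hy m).ne'
  have hdist : ∀ s, 0 < s → hilbertDist (x s) y = s := fun s hs => by
    have hL : ∀ m, L m ∈ Set.Icc 0 1 := fun m => by
      by_cases h : m = k <;> simp [L, h]
    rw [hilbertDist_eq_log_div_of_le (p := k) (q := l)] <;> simp only [hratio]
    · simp [L, hkl.symm]
    · exact fun m => exp_le_exp.2 (by simpa [L] using mul_le_mul_of_nonneg_left (hL m).2 hs.le)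
    · exact fun m => exp_le_exp.2 (by simpa [L, hkl.symm] using mul_nonneg hs.le (hL m).1)
  set φ : ℝ → ℝ := fun s => log (∑ m, y m * M m i * exp (s * L m))
    - log (∑ m, y m * M m j * exp (s * L m))
  have hφ : HasDerivAt φ
      (y k * M k i / Matrix.vecMul y M i - y k * M k j / Matrix.vecMul y M j) 0 := by
    refine ((hasDerivAt_log_sum_mul_exp (fun m => mul_pos (hy m) (hM m i)) L 0).sub
      (hasDerivAt_log_sum_mul_exp (fun m => mul_pos (hy m) (hM m j)) L 0)).congr_deriv ?_
    simp [L, Pi.single_apply, Matrix.vecMul, dotProduct]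
  have hslope : ∀ s, 0 < s → slope φ 0 s ≤ birkhoff M := fun s hs => by
    have hvec : ∀ c, Matrix.vecMul (x s) M c = ∑ m, y m * M m c * exp (s * L m) := fun c =>
      (sum_congr rfl fun m _ => by ring : ∑ m, x s m * M m c = _)
    have hvec₀ : ∀ c, Matrix.vecMul y M c = ∑ m, y m * M m c * exp (0 * L m) := fun c => by
      simp [Matrix.vecMul, dotProduct]
    calc slope φ 0 s = log ((Matrix.vecMul (x s) M i / Matrix.vecMul y M i)
          / (Matrix.vecMul (x s) M j / Matrix.vecMul y M j)) / hilbertDist (x s) y := by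
          have hP := vecMul_pos hM (hx s)
          have hQ := vecMul_pos hM hy
          rw [hdist s hs, slope_def_field, sub_zero,
            log_div (div_pos (hP i) (hQ i)).ne' (div_pos (hP j) (hQ j)).ne',
            log_div (hP i).ne' (hQ i).ne', log_div (hP j).ne' (hQ j).ne']
          simp only [φ, hvec, hvec₀]
          ring
      _ ≤ hilbertDist (Matrix.vecMul (x s) M) (Matrix.vecMul y M) / hilbertDist (x s) y :=
          div_le_div_of_nonneg_right (log_div_le_hilbertDist (vecMul_pos hM (hx s))
            (vecMul_pos hM hy) i j) (by rw [hdist s hs]; exact hs.le)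
      _ ≤ birkhoff M := div_hilbertDist_le_birkhoff hM (hx s) hy (by rw [hdist s hs]; exact hs)
  refine le_of_tendsto ((hasDerivWithinAt_iff_tendsto_slope' (s := Set.Ioi 0) (lt_irrefl 0)).1
    hφ.hasDerivWithinAt) ?_
  filter_upwards [self_mem_nhdsWithin] with s hs using hslope s hs

/-- Letting the mass of `y` off the rows `k` and `l` tend to zero in the previous lemma. -/
lemma two_rows_le_birkhoff (hM : ∀ i j, 0 < M i j) {k l : Fin K} (hkl : k ≠ l) (i j : Fin K)
    {α β : ℝ} (hα : 0 < α) (hβ : 0 < β) :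
    α * M k i / (α * M k i + β * M l i) - α * M k j / (α * M k j + β * M l j) ≤ birkhoff M := by
  set y : ℝ → Fin K → ℝ := fun ε => Pi.single k α + Pi.single l β + fun _ => ε
  set F : (Fin K → ℝ) → ℝ := fun z =>
    z k * M k i / Matrix.vecMul z M i - z k * M k j / Matrix.vecMul z M j
  have hy₀ : ∀ c, Matrix.vecMul (y 0) M c = α * M k c + β * M l c := fun c => by
    simp [y, ← Pi.zero_def, Matrix.add_vecMul, Matrix.single_vecMul]
  have hyk : y 0 k = α := by simp [y, hkl.symm]
  have hcont : ContinuousAt (fun ε => F (y ε)) 0 := by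
    have hy : Continuous y := by fun_prop
    have hvec : ∀ c, Continuous fun ε => Matrix.vecMul (y ε) M c := fun c =>
      (continuous_apply c).comp (hy.matrix_vecMul continuous_const)
    have hyk : Continuous fun ε => y ε k := (continuous_apply k).comp hy
    refine ((hyk.mul continuous_const).continuousAt.div (hvec i).continuousAt ?_).sub
      ((hyk.mul continuous_const).continuousAt.div (hvec j).continuousAt ?_)
    · rw [hy₀]; exact (add_pos (mul_pos hα (hM k i)) (mul_pos hβ (hM l i))).ne'
    · rw [hy₀]; exact (add_pos (mul_pos hα (hM k j)) (mul_pos hβ (hM l j))).ne'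
  have hpos : ∀ ε, 0 < ε → ∀ m, 0 < y ε m := fun ε hε m => by
    have h₁ := (Pi.single_nonneg.2 hα.le : (0 : Fin K → ℝ) ≤ Pi.single k α) m
    have h₂ := (Pi.single_nonneg.2 hβ.le : (0 : Fin K → ℝ) ≤ Pi.single l β) m
    simp only [y, Pi.add_apply, Pi.zero_apply] at h₁ h₂ ⊢
    linarith
  have hlim := hcont.tendsto.mono_left (nhdsWithin_le_nhds (s := Set.Ioi 0))
  simp only [F, hy₀, hyk] at hlim
  refine le_of_tendsto hlim ?_
  filter_upwards [self_mem_nhdsWithin] with ε hε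
    using mul_div_vecMul_sub_le_birkhoff hM (hpos ε hε) hkl i j

lemma birkhoffRatio_crossRatio_le_birkhoff (hM : ∀ i j, 0 < M i j) {k l : Fin K} (hkl : k ≠ l)
    (i j : Fin K) : birkhoffRatio (crossRatio M (k, l) (i, j)) ≤ birkhoff M := by
  -- the weights `α : β = √(M l i * M l j) : √(M k i * M k j)` maximize the left side of
  -- `two_rows_le_birkhoff`
  rw [crossRatio, ← mul_div_sub_mul_div_eq_birkhoffRatio (hM k i) (hM k j) (hM l i) (hM l j)]
  exact two_rows_le_birkhoff hM hkl i j (mul_pos (sqrt_pos.2 (hM l i)) (sqrt_pos.2 (hM l j)))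
    (mul_pos (sqrt_pos.2 (hM k i)) (sqrt_pos.2 (hM k j)))

theorem birkhoff_eq_birkhoffRatio_maxCrossRatio (hM : ∀ i j, 0 < M i j) :
    birkhoff M = birkhoffRatio (maxCrossRatio M) := by
  refine le_antisymm (birkhoff_le_s15 hM) ?_
  obtain ⟨⟨k, l⟩, c, hc⟩ := exists_crossRatio_eq_maxCrossRatio M
  rw [← hc]
  rcases eq_or_ne k l with rfl | hkl
  · simpa [crossRatio_diag hM, birkhoffRatio] using birkhoff_nonneg hM
  · exact birkhoffRatio_crossRatio_le_birkhoff hM hkl c.1 c.2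

end Birkhoff

/-- The Birkhoff contraction coefficient of the transpose equals that of the matrix:
`τ(Mᵀ) = τ(M)` for entrywise positive `M`. -/
theorem birkhoff_transpose
    {K : ℕ} (hK : 0 < K)
    (M : Matrix (Fin K) (Fin K) ℝ) (hM_pos : ∀ i j, 0 < M i j) :
    birkhoff (Matrix.transpose M) = birkhoff M := by
  have : NeZero K := ⟨hK.ne'⟩
  rw [birkhoff_eq_birkhoffRatio_maxCrossRatio hM_pos,
    birkhoff_eq_birkhoffRatio_maxCrossRatio (M := Mᵀ) fun i j => hM_pos j i,
    maxCrossRatio_transpose]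
end

section
/- For any two interior probability vectors x, y ∈ ℝ^K, the sup-norm distance is controlled by the Hilbert projective metric: ‖x − y‖_∞ ≤ exp(d(x,y)) − 1. Hence convergence to zero in the Hilbert projective metric implies convergence to zero in norm for probability vectors. -/
open Finset

section Ratios

variable {ι : Type*} [Fintype ι] {x y : ι → ℝ}

theorem ciInf_div_le_one [Nonempty ι] (hy : ∀ i, 0 < y i) (h : ∑ i, x i ≤ ∑ i, y i) :
    ⨅ i, x i / y i ≤ 1 := by
  obtain ⟨i, -, hi⟩ := exists_le_of_sum_le univ_nonempty h
  exact (Finite.ciInf_le _ i).trans ((div_le_one (hy i)).2 hi)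

theorem one_le_ciSup_div [Nonempty ι] (hy : ∀ i, 0 < y i) (h : ∑ i, y i ≤ ∑ i, x i) :
    1 ≤ ⨆ i, x i / y i := by
  obtain ⟨i, -, hi⟩ := exists_le_of_sum_le univ_nonempty h
  exact ((one_le_div (hy i)).2 hi).trans (Finite.le_ciSup (fun j => x j / y j) i)

theorem ciInf_div_pos [Nonempty ι] (hx : ∀ i, 0 < x i) (hy : ∀ i, 0 < y i) :
    0 < ⨅ i, x i / y i := by
  obtain ⟨i, hi⟩ := exists_eq_ciInf_of_finite (f := fun i => x i / y i)
  exact hi ▸ div_pos (hx i) (hy i)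

theorem abs_sub_le_ciSup_div_sub_ciInf_div (hy : ∀ i, 0 < y i) (hy_sum : ∑ i, y i = 1)
    (h_inf : ⨅ i, x i / y i ≤ 1) (h_sup : 1 ≤ ⨆ i, x i / y i) (i : ι) :
    |x i - y i| ≤ (⨆ i, x i / y i) - ⨅ i, x i / y i := by
  have hyi : y i ≤ 1 := hy_sum ▸ single_le_sum (fun j _ => (hy j).le) (mem_univ i)
  have hxy : x i - y i = y i * (x i / y i - 1) := by field_simp [(hy i).ne']
  calc |x i - y i| = y i * |x i / y i - 1| := by rw [hxy, abs_mul, abs_of_pos (hy i)]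
    _ ≤ |x i / y i - 1| := mul_le_of_le_one_left (abs_nonneg _) hyi
    _ ≤ _ := abs_sub_le_of_le_of_le (Finite.ciInf_le _ i)
      (Finite.le_ciSup (fun j => x j / y j) i) h_inf h_sup

end Ratios

theorem exp_hilbertDist {K : ℕ} [Nonempty (Fin K)] {x y : Fin K → ℝ} (hx : ∀ i, 0 < x i)
    (hy : ∀ i, 0 < y i) :
    Real.exp (hilbertDist x y) = (⨆ i, x i / y i) / ⨅ i, x i / y i := by
  have hm := ciInf_div_pos hx hy
  have hmM : ⨅ i, x i / y i ≤ ⨆ i, x i / y i :=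
    ciInf_le_ciSup (Set.finite_range _).bddBelow (Set.finite_range _).bddAbove
  exact Real.exp_log (div_pos (hm.trans_le hmM) hm)

/-- For interior probability vectors, the sup-norm distance is controlled by the Hilbert
projective metric: `‖x − y‖_∞ ≤ exp (d(x,y)) − 1`. -/
theorem supnorm_le_exp_hilbertDist_sub_one
    {K : ℕ} (hK : 0 < K)
    (x y : Fin K → ℝ)
    (hx_pos : ∀ i, 0 < x i) (hx_sum : ∑ i, x i = 1)
    (hy_pos : ∀ i, 0 < y i) (hy_sum : ∑ i, y i = 1) :
    ‖x - y‖ ≤ Real.exp (hilbertDist x y) - 1 := by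
  have : Nonempty (Fin K) := Fin.pos_iff_nonempty.mp hK
  have h_inf := ciInf_div_le_one hy_pos (hx_sum.trans hy_sum.symm).le
  have h_sup := one_le_ciSup_div hy_pos (hy_sum.trans hx_sum.symm).le
  have hm := ciInf_div_pos hx_pos hy_pos
  have h_bound := abs_sub_le_ciSup_div_sub_ciInf_div hy_pos hy_sum h_inf h_sup
  rw [exp_hilbertDist hx_pos hy_pos]
  set M := ⨆ i, x i / y i
  set m := ⨅ i, x i / y i
  have h_spread : 0 ≤ M - m := sub_nonneg.2 (h_inf.trans h_sup)
  rw [div_sub_one hm.ne', pi_norm_le_iff_of_nonneg (div_nonneg h_spread hm.le)]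
  exact fun i => (h_bound i).trans (le_div_self h_spread hm h_inf)
end
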